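/- arXiv:1503.00897 — 4 statements merged into one kernel-verified Lean document; each statement's English description precedes it below -/
import Mathlib

section
/- For all integers 0 ≤ k ≤ n: ∑_{c=0}^{min(k,n-k)} √((n-k-c)! · (k-c)!) · c! · C(k,c) · C(n-k,c) ≤ √(n!) · 2ⁿ. -/
lemma choose_le_two_pow' (m c : ℕ) : m.choose c ≤ 2 ^ m := by
  rcases le_or_gt c m with hc | hc
  · calc m.choose c ≤ ∑ i ∈ Finset.range (m + 1), m.choose i :=
        Finset.single_le_sum (fun i _ => Nat.zero_le _) (Finset.mem_range.2 (Nat.lt_succ_of_le hc))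
      _ = 2 ^ m := Nat.sum_range_choose m
  · simp [Nat.choose_eq_zero_of_lt hc]

/-- The bound on the sum over all contractions:
`∑_{c=0}^{min(k,n-k)} √((n-k-c)!(k-c)!) c! C(k,c) C(n-k,c) ≤ √(n!) 2ⁿ`. -/
theorem stmt8 (n k : ℕ) (h : k ≤ n) :
    ∑ c ∈ Finset.range (min k (n - k) + 1),
      Real.sqrt ((Nat.factorial (n - k - c) * Nat.factorial (k - c) : ℕ)) *
        (Nat.factorial c : ℝ) * (Nat.choose k c : ℝ) * (Nat.choose (n - k) c : ℝ)
    ≤ Real.sqrt (Nat.factorial n) * 2 ^ n := by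
  have step1 : ∀ c ∈ Finset.range (min k (n - k) + 1),
      Real.sqrt ((Nat.factorial (n - k - c) * Nat.factorial (k - c) : ℕ)) *
        (Nat.factorial c : ℝ) * (Nat.choose k c : ℝ) * (Nat.choose (n - k) c : ℝ)
      ≤ Real.sqrt (Nat.factorial n) *
          ((Nat.choose k c * Nat.choose (n - k) c : ℕ) : ℝ) := by
    intro c hc
    simp only [Finset.mem_range, Nat.lt_succ_iff, le_min_iff] at hc
    obtain ⟨hck, hcnk⟩ := hc
    have key : (Nat.factorial (n - k - c) * Nat.factorial (k - c)) *
        (Nat.factorial c * Nat.factorial c) ≤ Nat.factorial n := by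
      have d1 : Nat.factorial (n - k - c) * Nat.factorial (k - c) ∣
          Nat.factorial ((n - k - c) + (k - c)) :=
        Nat.factorial_mul_factorial_dvd_factorial_add _ _
      have d2 : Nat.factorial ((n - k - c) + (k - c)) * Nat.factorial c ∣
          Nat.factorial ((n - k - c) + (k - c) + c) :=
        Nat.factorial_mul_factorial_dvd_factorial_add _ _
      have d3 : Nat.factorial ((n - k - c) + (k - c) + c) * Nat.factorial c ∣
          Nat.factorial ((n - k - c) + (k - c) + c + c) :=
        Nat.factorial_mul_factorial_dvd_factorial_add _ _
      have e : (n - k - c) + (k - c) + c + c = n := by omega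
      have dvd : (Nat.factorial (n - k - c) * Nat.factorial (k - c)) *
          (Nat.factorial c * Nat.factorial c) ∣
          Nat.factorial ((n - k - c) + (k - c) + c + c) := by
        calc (Nat.factorial (n - k - c) * Nat.factorial (k - c)) *
              (Nat.factorial c * Nat.factorial c)
            = ((Nat.factorial (n - k - c) * Nat.factorial (k - c)) * Nat.factorial c) *
              Nat.factorial c := by ring
          _ ∣ (Nat.factorial ((n - k - c) + (k - c)) * Nat.factorial c) * Nat.factorial c :=
              mul_dvd_mul (mul_dvd_mul_right d1 _) dvd_rfl
          _ ∣ Nat.factorial ((n - k - c) + (k - c) + c) * Nat.factorial c :=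
              mul_dvd_mul_right d2 _
          _ ∣ Nat.factorial ((n - k - c) + (k - c) + c + c) := d3
      rw [e] at dvd
      exact Nat.le_of_dvd (Nat.factorial_pos n) dvd
    have h1 : Real.sqrt ((Nat.factorial (n - k - c) * Nat.factorial (k - c) : ℕ)) *
        (Nat.factorial c : ℝ) ≤ Real.sqrt (Nat.factorial n) := by
      have : Real.sqrt ((Nat.factorial (n - k - c) * Nat.factorial (k - c) : ℕ)) *
          (Nat.factorial c : ℝ) =
          Real.sqrt (((Nat.factorial (n - k - c) * Nat.factorial (k - c)) *
            (Nat.factorial c * Nat.factorial c) : ℕ)) := by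
        rw [show (((Nat.factorial (n - k - c) * Nat.factorial (k - c)) *
            (Nat.factorial c * Nat.factorial c) : ℕ) : ℝ) =
            ((Nat.factorial (n - k - c) * Nat.factorial (k - c) : ℕ) : ℝ) *
            ((Nat.factorial c : ℝ) * (Nat.factorial c : ℝ)) by push_cast; ring,
          Real.sqrt_mul (by positivity), Real.sqrt_mul_self (by positivity)]
      rw [this]
      exact Real.sqrt_le_sqrt (by exact_mod_cast key)
    calc Real.sqrt ((Nat.factorial (n - k - c) * Nat.factorial (k - c) : ℕ)) *
          (Nat.factorial c : ℝ) * (Nat.choose k c : ℝ) * (Nat.choose (n - k) c : ℝ)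
        ≤ Real.sqrt (Nat.factorial n) * (Nat.choose k c : ℝ) * (Nat.choose (n - k) c : ℝ) := by
          have := mul_le_mul_of_nonneg_right (mul_le_mul_of_nonneg_right h1
            (by positivity : (0:ℝ) ≤ (Nat.choose k c : ℝ)))
            (by positivity : (0:ℝ) ≤ (Nat.choose (n - k) c : ℝ))
          linarith
      _ = Real.sqrt (Nat.factorial n) * ((Nat.choose k c * Nat.choose (n - k) c : ℕ) : ℝ) := by
          push_cast; ring
  calc ∑ c ∈ Finset.range (min k (n - k) + 1),
        Real.sqrt ((Nat.factorial (n - k - c) * Nat.factorial (k - c) : ℕ)) *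
          (Nat.factorial c : ℝ) * (Nat.choose k c : ℝ) * (Nat.choose (n - k) c : ℝ)
      ≤ ∑ c ∈ Finset.range (min k (n - k) + 1),
        Real.sqrt (Nat.factorial n) * ((Nat.choose k c * Nat.choose (n - k) c : ℕ) : ℝ) :=
        Finset.sum_le_sum step1
    _ = Real.sqrt (Nat.factorial n) *
        ((∑ c ∈ Finset.range (min k (n - k) + 1), Nat.choose k c * Nat.choose (n - k) c : ℕ) : ℝ) := by
        rw [← Finset.mul_sum]; push_cast; ring
    _ ≤ Real.sqrt (Nat.factorial n) * 2 ^ n := by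
        apply mul_le_mul_of_nonneg_left _ (Real.sqrt_nonneg _)
        have hsum : (∑ c ∈ Finset.range (min k (n - k) + 1),
            Nat.choose k c * Nat.choose (n - k) c) ≤ 2 ^ n := by
          calc (∑ c ∈ Finset.range (min k (n - k) + 1), Nat.choose k c * Nat.choose (n - k) c)
              ≤ ∑ c ∈ Finset.range (min k (n - k) + 1), Nat.choose k c * 2 ^ (n - k) :=
                Finset.sum_le_sum fun c _ =>
                  Nat.mul_le_mul_left _ (choose_le_two_pow' (n - k) c)
            _ = (∑ c ∈ Finset.range (min k (n - k) + 1), Nat.choose k c) * 2 ^ (n - k) := by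
                rw [Finset.sum_mul]
            _ ≤ (∑ c ∈ Finset.range (k + 1), Nat.choose k c) * 2 ^ (n - k) := by
                apply Nat.mul_le_mul_right
                apply Finset.sum_le_sum_of_subset
                apply Finset.range_subset_range.2
                omega
            _ = 2 ^ k * 2 ^ (n - k) := by rw [Nat.sum_range_choose]
            _ = 2 ^ n := by rw [← pow_add]; congr 1; omega
        calc ((∑ c ∈ Finset.range (min k (n - k) + 1),
              Nat.choose k c * Nat.choose (n - k) c : ℕ) : ℝ)
            ≤ ((2 ^ n : ℕ) : ℝ) := by exact_mod_cast hsum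
          _ = 2 ^ n := by push_cast; ring
end

section
/- Let h be analytic on the strip S(-π, 0) = {ζ ∈ ℂ : -π < Im ζ < 0}, continuous on its closure, with θ ↦ h(θ - iλ) in L²(ℝ) for each 0 ≤ λ ≤ π and sup_{0≤λ≤π} ‖h(·-iλ)‖₂ < ∞, and with h(θ-iλ) → 0 uniformly in λ as |θ| → ∞. Then for every θ ∈ ℝ: h(θ - iπ/2) = (2πi)⁻¹ ∫_ℝ [ h(θ' - iπ)/(θ' - θ - iπ/2) - h(θ')/(θ' - θ + iπ/2) ] dθ'. -/
/-!
Put `u = θ - iπ/2` and apply Cauchy's theorem on the rectangles `[-R, R] × [-π, 0]` to the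
difference quotient `g = dslope h u`. It is holomorphic in the open strip, continuous on its
closure and tends to `0` at infinity inside it, so the vertical sides vanish as `R → ∞` and
`∫ (g(x - iπ) - g(x)) dx = 0`. On the two boundary lines `g` splits into the integrand of the
claim, integrable as a product of two `L²` functions, minus `h(u)` times the kernel
`(x - θ - iπ/2)⁻¹ - (x - θ + iπ/2)⁻¹ = iπ / ((x - θ)² + π²/4)`, whose integral is `2πi`.
-/

open MeasureTheory Complex Set Filter Topology Bornology

section Strip

variable {E : Type*} [NormedAddCommGroup E] {F : ℂ → E} {a b : ℝ}

lemma tendsto_ofReal_add_mul_I_strip :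
    Tendsto (fun p : ℝ × ℝ => (p.1 : ℂ) + p.2 * I) (cobounded ℝ ×ˢ 𝓟 (Icc a b))
      (cobounded ℂ ⊓ 𝓟 (im ⁻¹' Icc a b)) := by
  refine tendsto_inf.2 ⟨?_, tendsto_principal.2 ?_⟩
  · rw [← tendsto_norm_atTop_iff_cobounded]
    refine tendsto_atTop_mono (fun p => ?_) (tendsto_norm_cobounded_atTop.comp tendsto_fst)
    simpa using abs_re_le_norm ((p.1 : ℂ) + p.2 * I)
  · filter_upwards [prod_mem_prod univ_mem (mem_principal_self (Icc a b))] with p hp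
    simpa using hp.2

lemma tendsto_strip_of_abs_re_ge
    (hF : ∀ ε > 0, ∃ T, ∀ z ∈ im ⁻¹' Icc a b, T ≤ |z.re| → ‖F z‖ ≤ ε) :
    Tendsto F (cobounded ℂ ⊓ 𝓟 (im ⁻¹' Icc a b)) (𝓝 0) := by
  rw [NormedAddGroup.tendsto_nhds_zero]
  intro ε hε
  obtain ⟨T, hT⟩ := hF (ε / 2) (half_pos hε)
  rw [eventually_inf_principal]
  filter_upwards [eventually_cobounded_le_norm (T + max |a| |b|)] with z hz hzS
  have him : |z.im| ≤ max |a| |b| := abs_le_max_abs_abs hzS.1 hzS.2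
  have hre : T ≤ |z.re| := by linarith [norm_le_abs_re_add_abs_im z]
  linarith [hT z hzS hre]

lemma tendsto_intervalIntegral_vertical_zero [NormedSpace ℝ E] (hab : a ≤ b)
    (hF : Tendsto F (cobounded ℂ ⊓ 𝓟 (im ⁻¹' Icc a b)) (𝓝 0)) :
    Tendsto (fun x : ℝ => ∫ y in a..b, F (x + y * I)) (cobounded ℝ) (𝓝 0) := by
  rw [NormedAddGroup.tendsto_nhds_zero] at hF ⊢
  intro ε hε
  have hδ : 0 < ε / (b - a + 1) := by positivity
  have hsmall := tendsto_ofReal_add_mul_I_strip.eventually (hF _ hδ)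
  rw [eventually_prod_principal_iff] at hsmall
  filter_upwards [hsmall] with x hx
  calc ‖∫ y in a..b, F (x + y * I)‖ ≤ ε / (b - a + 1) * |b - a| :=
        intervalIntegral.norm_integral_le_of_norm_le_const fun y hy =>
          (hx y (Ioc_subset_Icc_self (uIoc_of_le hab ▸ hy))).le
    _ < ε := by
        rw [abs_of_nonneg (sub_nonneg.2 hab), div_mul_eq_mul_div, div_lt_iff₀ (by linarith)]
        nlinarith

theorem integral_sub_eq_zero_of_differentiableOn_strip [NormedSpace ℂ E] (hab : a ≤ b)
    (hcont : ContinuousOn F (im ⁻¹' Icc a b)) (hdiff : DifferentiableOn ℂ F (im ⁻¹' Ioo a b))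
    (hdecay : Tendsto F (cobounded ℂ ⊓ 𝓟 (im ⁻¹' Icc a b)) (𝓝 0))
    (hint : Integrable fun x : ℝ => F (x + a * I) - F (x + b * I)) :
    ∫ x : ℝ, (F (x + a * I) - F (x + b * I)) = 0 := by
  set V : ℝ → E := fun x => ∫ y in a..b, F (x + y * I)
  have hhoriz (c : ℝ) (hc : c ∈ Icc a b) (R : ℝ) :
      IntervalIntegrable (fun x : ℝ => F (x + c * I)) volume (-R) R :=
    (hcont.comp_continuous (by fun_prop) fun x => by simpa using hc).intervalIntegrable _ _
  have hrect (R : ℝ) :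
      ∫ x in -R..R, (F (x + a * I) - F (x + b * I)) = -(I • V R - I • V (-R)) := by
    have hzero := integral_boundary_rect_eq_zero_of_continuousOn_of_differentiableOn F
      (-R + a * I) (R + b * I)
      (hcont.mono fun z hz => by simpa [uIcc_of_le hab] using hz.2)
      (hdiff.mono fun z hz => by simpa [hab] using hz.2)
    simp only [add_re, neg_re, ofReal_re, mul_re, I_re, mul_zero, ofReal_im, I_im, mul_one,
      sub_self, add_zero, add_im, neg_im, mul_im, zero_add, neg_zero] at hzero
    rw [intervalIntegral.integral_sub (hhoriz a ⟨le_rfl, hab⟩ R) (hhoriz b ⟨hab, le_rfl⟩ R),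
      eq_neg_iff_add_eq_zero, ← hzero]
    simp only [V, ofReal_neg]
    abel
  have hvert : Tendsto (fun R : ℝ => -(I • V R - I • V (-R))) atTop (𝓝 (-(I • 0 - I • 0))) := by
    have hV := tendsto_intervalIntegral_vertical_zero hab hdecay
    have hle := IsOrderBornology.atTop_le_cobounded (α := ℝ)
    exact (((hV.mono_left hle).const_smul I).sub
      (((hV.comp tendsto_neg_cobounded).mono_left hle).const_smul I)).neg
  rw [smul_zero, sub_zero, neg_zero] at hvert
  exact tendsto_nhds_unique
    ((intervalIntegral_tendsto_integral hint tendsto_neg_atTop_atBot tendsto_id).congr hrect) hvert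

end Strip

lemma tendsto_dslope_zero {E : Type*} [NormedAddCommGroup E] [NormedSpace ℂ E] {l : Filter ℂ}
    (hl : l ≤ cobounded ℂ) {f : ℂ → E} {c : E} (hf : Tendsto f l (𝓝 c)) (u : ℂ) :
    Tendsto (dslope f u) l (𝓝 0) := by
  have hne : ∀ᶠ z in l, z ≠ u := hl <| (eventually_cobounded_le_norm (‖u‖ + 1)).mono
    fun z hz hzu => by rw [hzu] at hz; linarith
  have hslope : Tendsto (fun z => (z - u)⁻¹ • (f z - f u)) l (𝓝 0) := by
    simpa using (tendsto_inv₀_cobounded.comp ((tendsto_sub_const_cobounded u).comp hl)).smul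
      (hf.sub_const (f u))
  refine hslope.congr' (hne.mono fun z hz => ?_)
  rw [dslope_of_ne _ hz, slope_def_module]

lemma inv_sq_add_sub_sq_eq (θ : ℝ) {c : ℝ} (hc : c ≠ 0) :
    (fun x : ℝ => (c ^ 2 + (x - θ) ^ 2)⁻¹) = fun x => (c ^ 2)⁻¹ * (1 + ((x - θ) / c) ^ 2)⁻¹ := by
  ext x; field_simp

lemma integrable_inv_sq_add_sub_sq (θ : ℝ) {c : ℝ} (hc : c ≠ 0) :
    Integrable fun x : ℝ => (c ^ 2 + (x - θ) ^ 2)⁻¹ := by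
  rw [inv_sq_add_sub_sq_eq θ hc]
  exact ((integrable_inv_one_add_sq.comp_div hc).comp_sub_right θ).const_mul _

lemma integral_inv_sq_add_sub_sq (θ : ℝ) {c : ℝ} (hc : 0 < c) :
    ∫ x : ℝ, (c ^ 2 + (x - θ) ^ 2)⁻¹ = Real.pi / c := by
  rw [inv_sq_add_sub_sq_eq θ hc.ne', integral_const_mul,
    integral_sub_right_eq_self (fun x => (1 + (x / c) ^ 2)⁻¹),
    Measure.integral_comp_div (fun x => (1 + x ^ 2)⁻¹), integral_univ_inv_one_add_sq,
    abs_of_pos hc, smul_eq_mul]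
  field_simp

lemma memLp_two_inv_ofReal_sub {w : ℂ} (hw : w.im ≠ 0) :
    MemLp (fun x : ℝ => ((x : ℂ) - w)⁻¹) 2 volume := by
  have hne (x : ℝ) : (x : ℂ) - w ≠ 0 := fun h => hw (by simpa using congrArg im h)
  have hcont : Continuous fun x : ℝ => ((x : ℂ) - w)⁻¹ := by fun_prop (disch := exact hne _)
  rw [memLp_two_iff_integrable_sq_norm hcont.aestronglyMeasurable]
  have hsq (x : ℝ) : ‖((x : ℂ) - w)⁻¹‖ ^ 2 = (w.im ^ 2 + (x - w.re) ^ 2)⁻¹ := by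
    rw [norm_inv, inv_pow, Complex.sq_norm, normSq_apply]; simp [sq, add_comm]
  simp_rw [hsq]
  exact integrable_inv_sq_add_sub_sq w.re hw

lemma inv_sub_sub_mul_I_sub_inv_sub_add_mul_I (x θ : ℝ) {c : ℝ} (hc : c ≠ 0) :
    ((x : ℂ) - θ - c * I)⁻¹ - ((x : ℂ) - θ + c * I)⁻¹ =
      2 * c * I * (((c ^ 2 + (x - θ) ^ 2)⁻¹ : ℝ) : ℂ) := by
  have h1 : (x : ℂ) - θ - c * I ≠ 0 := fun h => hc (by simpa using congrArg im h)
  have h2 : (x : ℂ) - θ + c * I ≠ 0 := fun h => hc (by simpa using congrArg im h)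
  have h3 : ((x : ℂ) - θ - c * I) * ((x : ℂ) - θ + c * I) = ((c ^ 2 + (x - θ) ^ 2 : ℝ) : ℂ) := by
    push_cast; ring_nf; rw [I_sq]; ring
  rw [ofReal_inv, ← h3]
  field_simp
  ring

lemma integrable_inv_sub_sub_mul_I_sub_inv_sub_add_mul_I (θ : ℝ) {c : ℝ} (hc : c ≠ 0) :
    Integrable fun x : ℝ => ((x : ℂ) - θ - c * I)⁻¹ - ((x : ℂ) - θ + c * I)⁻¹ := by
  simp_rw [inv_sub_sub_mul_I_sub_inv_sub_add_mul_I _ θ hc]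
  exact (integrable_inv_sq_add_sub_sq θ hc).ofReal.const_mul _

lemma integral_inv_sub_sub_mul_I_sub_inv_sub_add_mul_I (θ : ℝ) {c : ℝ} (hc : 0 < c) :
    ∫ x : ℝ, (((x : ℂ) - θ - c * I)⁻¹ - ((x : ℂ) - θ + c * I)⁻¹) = 2 * Real.pi * I := by
  have hc' : (c : ℂ) ≠ 0 := ofReal_ne_zero.2 hc.ne'
  simp_rw [inv_sub_sub_mul_I_sub_inv_sub_add_mul_I _ θ hc.ne']
  rw [integral_const_mul, integral_complex_ofReal, integral_inv_sq_add_sub_sq θ hc]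
  push_cast
  field_simp

lemma integrable_div_ofReal_sub_of_memLp_two {f : ℝ → ℂ} (hf : MemLp f 2 volume) {w : ℂ}
    (hw : w.im ≠ 0) : Integrable fun x : ℝ => f x / ((x : ℂ) - w) := by
  simp only [div_eq_mul_inv]
  exact hf.integrable_mul (memLp_two_inv_ofReal_sub hw)

theorem eq_two_pi_I_inv_mul_integral_strip_boundary {h : ℂ → ℂ} {a b : ℝ} (hab : a < b)
    (hcont : ContinuousOn h (im ⁻¹' Icc a b)) (hdiff : DifferentiableOn ℂ h (im ⁻¹' Ioo a b))
    (hdecay : Tendsto h (cobounded ℂ ⊓ 𝓟 (im ⁻¹' Icc a b)) (𝓝 0))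
    {u : ℂ} (hu : u.im = (a + b) / 2)
    (hint : Integrable fun x : ℝ =>
      h (x + a * I) / (x + a * I - u) - h (x + b * I) / (x + b * I - u)) :
    h u = (2 * Real.pi * I)⁻¹ *
      ∫ x : ℝ, (h (x + a * I) / (x + a * I - u) - h (x + b * I) / (x + b * I - u)) := by
  have hc : 0 < (b - a) / 2 := by linarith
  have hu_nhds : im ⁻¹' Ioo a b ∈ 𝓝 u :=
    (isOpen_Ioo.preimage continuous_im).mem_nhds <| by
      simp only [mem_preimage, hu, mem_Ioo]; constructor <;> linarith
  have hg_cont : ContinuousOn (dslope h u) (im ⁻¹' Icc a b) :=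
    (continuousOn_dslope (mem_of_superset hu_nhds (preimage_mono Ioo_subset_Icc_self))).2
      ⟨hcont, hdiff.differentiableAt hu_nhds⟩
  have hg_diff : DifferentiableOn ℂ (dslope h u) (im ⁻¹' Ioo a b) :=
    (differentiableOn_dslope hu_nhds).2 hdiff
  have hsub (x : ℝ) : (x : ℂ) + a * I - u = x - u.re - ((b - a) / 2 : ℝ) * I ∧
      (x : ℂ) + b * I - u = x - u.re + ((b - a) / 2 : ℝ) * I := by
    constructor <;> apply Complex.ext <;> simp [hu] <;> ring
  set K : ℝ → ℂ := fun x => ((x : ℂ) + a * I - u)⁻¹ - ((x : ℂ) + b * I - u)⁻¹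
  have hK_eq : K = fun x : ℝ =>
      ((x : ℂ) - u.re - ((b - a) / 2 : ℝ) * I)⁻¹ - ((x : ℂ) - u.re + ((b - a) / 2 : ℝ) * I)⁻¹ := by
    ext x; simp only [K, (hsub x).1, (hsub x).2]
  have hK : Integrable K := hK_eq ▸ integrable_inv_sub_sub_mul_I_sub_inv_sub_add_mul_I u.re hc.ne'
  have hne {y : ℝ} (hy : y ≠ u.im) (x : ℝ) : (x : ℂ) + y * I ≠ u :=
    fun h => hy (by simpa using congrArg im h)
  have hboundary (x : ℝ) : dslope h u (x + a * I) - dslope h u (x + b * I) =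
      (h (x + a * I) / (x + a * I - u) - h (x + b * I) / (x + b * I - u)) - h u * K x := by
    rw [dslope_of_ne _ (hne (by linarith) x), dslope_of_ne _ (hne (by linarith) x),
      slope_def_field, slope_def_field]
    ring
  have hzero := integral_sub_eq_zero_of_differentiableOn_strip hab.le hg_cont hg_diff
    (tendsto_dslope_zero inf_le_left hdecay u)
    ((hint.sub (hK.const_mul (h u))).congr (.of_forall fun x => (hboundary x).symm))
  simp only [hboundary] at hzero
  rw [integral_sub hint (hK.const_mul _), integral_const_mul, hK_eq,
    integral_inv_sub_sub_mul_I_sub_inv_sub_add_mul_I u.re hc, sub_eq_zero] at hzero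
  rw [hzero]
  field_simp

theorem stmt12_general (h : ℂ → ℂ)
    (hanal : DifferentiableOn ℂ h {ζ : ℂ | -Real.pi < ζ.im ∧ ζ.im < 0})
    (hcont : ContinuousOn h {ζ : ℂ | -Real.pi ≤ ζ.im ∧ ζ.im ≤ 0})
    (hL2 : ∀ lam ∈ Set.Icc (0 : ℝ) Real.pi,
      MemLp (fun θ : ℝ => h ((θ : ℂ) - (lam : ℂ) * Complex.I)) 2 (volume : Measure ℝ))
    (hdecay : ∀ ε : ℝ, 0 < ε → ∃ T : ℝ, ∀ (θ lam : ℝ), T ≤ |θ| →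
      lam ∈ Set.Icc (0 : ℝ) Real.pi →
      ‖h ((θ : ℂ) - (lam : ℂ) * Complex.I)‖ ≤ ε) :
    ∀ θ : ℝ,
      h ((θ : ℂ) - ((Real.pi : ℂ) / 2) * Complex.I)
        = (2 * (Real.pi : ℂ) * Complex.I)⁻¹ *
          ∫ θ' : ℝ,
            (h ((θ' : ℂ) - (Real.pi : ℂ) * Complex.I) /
                ((θ' : ℂ) - (θ : ℂ) - ((Real.pi : ℂ) / 2) * Complex.I) -
              h (θ' : ℂ) / ((θ' : ℂ) - (θ : ℂ) + ((Real.pi : ℂ) / 2) * Complex.I)) := by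
  intro θ
  have hπ := Real.pi_pos
  have hdecay' : Tendsto h (cobounded ℂ ⊓ 𝓟 (im ⁻¹' Icc (-Real.pi) 0)) (𝓝 0) := by
    refine tendsto_strip_of_abs_re_ge fun ε hε => ?_
    obtain ⟨T, hT⟩ := hdecay ε hε
    exact ⟨T, fun z hz hre => by
      simpa using hT z.re (-z.im) hre ⟨by linarith [hz.2], by linarith [hz.1]⟩⟩
  have hintegrand (x : ℝ) :
      h (x + (-Real.pi : ℝ) * I) / (x + (-Real.pi : ℝ) * I - (θ - (Real.pi : ℂ) / 2 * I)) -
          h (x + (0 : ℝ) * I) / (x + (0 : ℝ) * I - (θ - (Real.pi : ℂ) / 2 * I)) =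
        h ((x : ℂ) - Real.pi * I) / ((x : ℂ) - θ - (Real.pi : ℂ) / 2 * I) -
          h (x : ℂ) / ((x : ℂ) - θ + (Real.pi : ℂ) / 2 * I) := by
    simp only [ofReal_neg, neg_mul, ← sub_eq_add_neg, ofReal_zero, zero_mul, add_zero]
    ring
  have hint : Integrable fun x : ℝ =>
      h ((x : ℂ) - Real.pi * I) / ((x : ℂ) - θ - (Real.pi : ℂ) / 2 * I) -
        h (x : ℂ) / ((x : ℂ) - θ + (Real.pi : ℂ) / 2 * I) := by
    refine ((integrable_div_ofReal_sub_of_memLp_two (hL2 Real.pi ⟨hπ.le, le_rfl⟩)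
      (w := θ + (Real.pi : ℂ) / 2 * I) (by simp [hπ.ne'])).sub
      (integrable_div_ofReal_sub_of_memLp_two (hL2 0 ⟨le_rfl, hπ.le⟩)
      (w := θ - (Real.pi : ℂ) / 2 * I) (by simp [hπ.ne']))).congr (.of_forall fun x => ?_)
    simp only [Pi.sub_apply, ofReal_zero, zero_mul, sub_zero]
    ring
  have hcauchy := eq_two_pi_I_inv_mul_integral_strip_boundary (neg_lt_zero.2 hπ) hcont hanal
    hdecay' (u := θ - (Real.pi : ℂ) / 2 * I) (by simp [neg_div]) (by simpa only [hintegrand] using hint)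
  simpa only [hintegrand] using hcauchy

/-- Cauchy integral representation on the middle line of the strip
`S(-π,0)` for an analytic function with uniformly `L²`-bounded horizontal
slices decaying at infinity: the value `h(θ - iπ/2)` is recovered from the
boundary values on `Im ζ = 0` and `Im ζ = -π`. -/
theorem stmt12 (h : ℂ → ℂ)
    (hanal : DifferentiableOn ℂ h {ζ : ℂ | -Real.pi < ζ.im ∧ ζ.im < 0})
    (hcont : ContinuousOn h {ζ : ℂ | -Real.pi ≤ ζ.im ∧ ζ.im ≤ 0})
    (hL2 : ∀ lam ∈ Set.Icc (0 : ℝ) Real.pi,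
      MemLp (fun θ : ℝ => h ((θ : ℂ) - (lam : ℂ) * Complex.I)) 2 (volume : Measure ℝ))
    (hbd : ∃ M : ℝ, ∀ lam ∈ Set.Icc (0 : ℝ) Real.pi,
      eLpNorm (fun θ : ℝ => h ((θ : ℂ) - (lam : ℂ) * Complex.I)) 2 (volume : Measure ℝ)
        ≤ ENNReal.ofReal M)
    (hdecay : ∀ ε : ℝ, 0 < ε → ∃ T : ℝ, ∀ (θ lam : ℝ), T ≤ |θ| →
      lam ∈ Set.Icc (0 : ℝ) Real.pi →
      ‖h ((θ : ℂ) - (lam : ℂ) * Complex.I)‖ ≤ ε) :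
    ∀ θ : ℝ,
      h ((θ : ℂ) - ((Real.pi : ℂ) / 2) * Complex.I)
        = (2 * (Real.pi : ℂ) * Complex.I)⁻¹ *
          ∫ θ' : ℝ,
            (h ((θ' : ℂ) - (Real.pi : ℂ) * Complex.I) /
                ((θ' : ℂ) - (θ : ℂ) - ((Real.pi : ℂ) / 2) * Complex.I) -
              h (θ' : ℂ) / ((θ' : ℂ) - (θ : ℂ) + ((Real.pi : ℂ) / 2) * Complex.I)) :=
  stmt12_general h hanal hcont hL2 hdecay
end

section
/- Let S: ℝ → U(ℂᴺ ⊗ ℂᴺ) be a matrix-valued function of the form S(θ) = -F · exp(2iρ(θ)), where F is the flip operator F(u⊗v) = v⊗u, ρ: ℝ → L(ℂᴺ⊗ℂᴺ) is continuous with ρ(0) = 0, ρ(-θ) = -ρ(θ), conj-transpose ρ(θ)* = ρ(θ), and [F, ρ(θ)] = 0 for all θ. Define on L²(ℝ²) ⊗ (ℂᴺ)⊗² the operators (D₂(τ)Ψ)(θ₁,θ₂) := S(θ₂-θ₁)·Ψ(θ₂,θ₁), (D₂⁻(τ)Ψ)(θ₁,θ₂) := -F·Ψ(θ₂,θ₁),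 and the multiplication operator (𝓘₂Ψ)(θ₁,θ₂) := -exp(iρ(θ₁-θ₂))·Ψ(θ₁,θ₂). Then 𝓘₂ is unitary and intertwines: 𝓘₂ ∘ D₂(τ) = D₂⁻(τ) ∘ 𝓘₂. -/
/-! `e^{iρ}` is unitary as the exponential of the skew-adjoint `iρ`. For the intertwining,
oddness of `ρ` turns `e^{iρ(θ₁-θ₂)}` into `e^{-iρ(θ₂-θ₁)}`, and since `F` commutes with `ρ`,
`e^{-iρ} (-F e^{2iρ}) = -F e^{iρ}`. -/

open Complex ContinuousLinearMap

/-- The two-particle space `ℂᴺ ⊗ ℂᴺ`, realized as `EuclideanSpace ℂ (Fin N × Fin N)`. -/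
abbrev TwoParticle (N : ℕ) := EuclideanSpace ℂ (Fin N × Fin N)

open NormedSpace

theorem exp_mul_mul_exp_of_commute {A : Type*} [NormedRing A] [NormedAlgebra ℚ A]
    [CompleteSpace A] {f a b : A} (hfa : Commute f a) (hab : Commute a b) :
    exp a * (f * exp b) = f * exp (a + b) := by
  rw [← mul_assoc, ← hfa.exp_right.eq, mul_assoc, exp_add_of_commute hab]

theorem exp_I_smul_neg_mul_mul_exp_two_I_smul {A : Type*} [NormedRing A]
    [NormedAlgebra ℂ A] [CompleteSpace A] {f a : A} (hfa : Commute f a) :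
    exp (I • -a) * (f * exp ((2 * I) • a)) = f * exp (I • a) := by
  let +nondep : NormedAlgebra ℚ A := .restrictScalars ℚ ℂ A
  rw [smul_neg, exp_mul_mul_exp_of_commute (hfa.smul_right I).neg_right
    ((Commute.refl a).smul_left I |>.neg_left.smul_right _)]
  congr 2
  module

theorem stmt16_general (N : ℕ)
    (F : TwoParticle N →L[ℂ] TwoParticle N)
    (ρ : ℝ → (TwoParticle N →L[ℂ] TwoParticle N))
    (hρodd : ∀ θ : ℝ, ρ (-θ) = -ρ θ)
    (hρsa : ∀ θ : ℝ, ContinuousLinearMap.adjoint (ρ θ) = ρ θ)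
    (hρF : ∀ θ : ℝ, F ∘L ρ θ = ρ θ ∘L F)
    (S : ℝ → (TwoParticle N →L[ℂ] TwoParticle N))
    (hS : ∀ θ : ℝ, S θ = -(F ∘L NormedSpace.exp ((2 * Complex.I) • ρ θ))) :
    (∀ θ : ℝ,
      ContinuousLinearMap.adjoint (NormedSpace.exp (Complex.I • ρ θ)) ∘L
          NormedSpace.exp (Complex.I • ρ θ) = 1 ∧
      NormedSpace.exp (Complex.I • ρ θ) ∘L
          ContinuousLinearMap.adjoint (NormedSpace.exp (Complex.I • ρ θ)) = 1) ∧
    ∀ (Ψ : ℝ × ℝ → TwoParticle N) (θ₁ θ₂ : ℝ),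
      -(NormedSpace.exp (Complex.I • ρ (θ₁ - θ₂)) ((S (θ₂ - θ₁)) (Ψ (θ₂, θ₁))))
        = -(F (-(NormedSpace.exp (Complex.I • ρ (θ₂ - θ₁)) (Ψ (θ₂, θ₁))))) := by
  refine ⟨fun θ => ?_, fun Ψ θ₁ θ₂ => ?_⟩
  · have hsa : ρ θ ∈ selfAdjoint _ := isSelfAdjoint_iff'.mpr (hρsa θ)
    rw [← star_eq_adjoint, ← mul_def, ← mul_def]
    exact Unitary.mem_iff.mp (selfAdjoint.expUnitary ⟨ρ θ, hsa⟩).prop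
  · have hphase := congr($(exp_I_smul_neg_mul_mul_exp_two_I_smul (hρF (θ₂ - θ₁)))
      (Ψ (θ₂, θ₁)))
    rw [← neg_sub θ₂ θ₁, hρodd, hS]
    simpa only [neg_apply, comp_apply, mul_apply_eq_comp, map_neg, neg_neg] using hphase

/-- For `S(θ) = -F e^{2iρ(θ)}` with a self-adjoint phase-shift matrix `ρ`
commuting with the flip `F`, `ρ(0) = 0`, `ρ(-θ) = -ρ(θ)`, the multiplication
operator `(𝓘₂Ψ)(θ₁,θ₂) = -e^{iρ(θ₁-θ₂)} Ψ(θ₁,θ₂)` is unitary and intertwines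
`(D₂(τ)Ψ)(θ₁,θ₂) = S(θ₂-θ₁)Ψ(θ₂,θ₁)` with `(D₂⁻(τ)Ψ)(θ₁,θ₂) = -F Ψ(θ₂,θ₁)`,
i.e. `𝓘₂ ∘ D₂(τ) = D₂⁻(τ) ∘ 𝓘₂` (stated pointwise). -/
theorem stmt16 (N : ℕ)
    (F : TwoParticle N →L[ℂ] TwoParticle N)
    (hF : ∀ (v : TwoParticle N) (i j : Fin N), F v (i, j) = v (j, i))
    (ρ : ℝ → (TwoParticle N →L[ℂ] TwoParticle N))
    (hρcont : Continuous ρ) (hρ0 : ρ 0 = 0) (hρodd : ∀ θ : ℝ, ρ (-θ) = -ρ θ)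
    (hρsa : ∀ θ : ℝ, ContinuousLinearMap.adjoint (ρ θ) = ρ θ)
    (hρF : ∀ θ : ℝ, F ∘L ρ θ = ρ θ ∘L F)
    (S : ℝ → (TwoParticle N →L[ℂ] TwoParticle N))
    (hS : ∀ θ : ℝ, S θ = -(F ∘L NormedSpace.exp ((2 * Complex.I) • ρ θ))) :
    (∀ θ : ℝ,
      ContinuousLinearMap.adjoint (NormedSpace.exp (Complex.I • ρ θ)) ∘L
          NormedSpace.exp (Complex.I • ρ θ) = 1 ∧
      NormedSpace.exp (Complex.I • ρ θ) ∘L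
          ContinuousLinearMap.adjoint (NormedSpace.exp (Complex.I • ρ θ)) = 1) ∧
    ∀ (Ψ : ℝ × ℝ → TwoParticle N) (θ₁ θ₂ : ℝ),
      -(NormedSpace.exp (Complex.I • ρ (θ₁ - θ₂)) ((S (θ₂ - θ₁)) (Ψ (θ₂, θ₁))))
        = -(F (-(NormedSpace.exp (Complex.I • ρ (θ₂ - θ₁)) (Ψ (θ₂, θ₁))))) :=
  stmt16_general N F ρ hρodd hρsa hρF S hS
end

section
/- Let R: ℝ → ℂ with |R(a)| = 1 for all a. On the fermionic Fock space over L²(ℝᵈ, dμ), define T_R(x) acting on n-particle vectors by multiplication with ∏_{k=1}^n R(x·p_k), and the deformed operators a*_{R,Q}(p) = a*(p) T_R(Qp)*, a_{R,Q}(p) = T_R(Qp) a(p), where Q is skew-symmetric for the Minkowski form (so Qp·p = 0) and a*, a satisfy CAR: {a(p),a*(q)} = ω(p)δ(p-q), {a(p),a(q)} = {a*(p),a*(q)} = 0. Then the deformed operators satisfy (as identities of operator-valued distributions): a*_{R,Q}(p) a*_{R,Q}(q) = -(R(Qq·p)/R(Qp·q)) · a*_{R,Q}(q) a*_{R,Q}(p),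 and a_{R,Q}(p) a*_{R,Q}(q) = ω(p)δ(p-q)·1 - (R(Qp·q)/R(Qq·p)) · a*_{R,Q}(q) a_{R,Q}(p). -/
/-- Zamolodchikov–Faddeev-type exchange relations for the deformed creation
and annihilation operators `a*_{R,Q}(p) = a*(p) T_R(Qp)*`,
`a_{R,Q}(p) = T_R(Qp) a(p)`.  Here, in an abstract algebra of
operator-valued distributional kernels: `an p`, `ad p` are the CAR kernels
with anticommutator `d p q` (the `ω(p)δ(p-q)·1` term, commuting with
everything and identifying `p` with `q`), `t p` is the invertible (unitary)
element `T_R(Qp)`, and `R p q` is the phase `R(Qp·q)`.  The hypotheses are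
the commutation rules `a(p)T_R(x) = R(x·p)T_R(x)a(p)`,
`a*(p)T_R(x) = R(x·p)⁻¹T_R(x)a*(p)`.  Conclusions:
`a*_{R,Q}(p) a*_{R,Q}(q) = -(R(Qq·p)/R(Qp·q)) a*_{R,Q}(q) a*_{R,Q}(p)` and
`a_{R,Q}(p) a*_{R,Q}(q) = ω(p)δ(p-q)·1 - (R(Qp·q)/R(Qq·p)) a*_{R,Q}(q) a_{R,Q}(p)`. -/
theorem stmt19 {A P : Type*} [Ring A] [Algebra ℂ A]
    (an ad : P → A) (t : P → Aˣ) (d : P → P → A) (R : P → P → ℂ)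
    (hR : ∀ p q, R p q ≠ 0)
    (hcar1 : ∀ p q, an p * ad q + ad q * an p = d p q)
    (hcar2 : ∀ p q, an p * an q + an q * an p = 0)
    (hcar3 : ∀ p q, ad p * ad q + ad q * ad p = 0)
    (hanT : ∀ p q, an p * (t q : A) = R q p • ((t q : A) * an p))
    (hadT : ∀ p q, ad p * (t q : A) = (R q p)⁻¹ • ((t q : A) * ad p))
    (htt : ∀ p q, Commute (t p : A) (t q : A))
    (hdcomm : ∀ p q (x : A), Commute (d p q) x)
    (hdt : ∀ p q, d p q * (t p : A) = d p q * (t q : A)) :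
    (∀ p q, (ad p * ((t p)⁻¹ : Aˣ)) * (ad q * ((t q)⁻¹ : Aˣ))
        = -((R q p * (R p q)⁻¹) • ((ad q * ((t q)⁻¹ : Aˣ)) * (ad p * ((t p)⁻¹ : Aˣ))))) ∧
    ∀ p q, ((t p : A) * an p) * (ad q * ((t q)⁻¹ : Aˣ))
        = d p q - (R p q * (R q p)⁻¹) • ((ad q * ((t q)⁻¹ : Aˣ)) * ((t p : A) * an p)) := by
  have hinvad : ∀ p q, (((t p)⁻¹ : Aˣ) : A) * ad q
      = (R p q)⁻¹ • (ad q * (((t p)⁻¹ : Aˣ) : A)) := by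
    intro p q
    have h2 : (((t p)⁻¹ : Aˣ) : A) * (ad q * (t p : A)) * (((t p)⁻¹ : Aˣ) : A)
        = (((t p)⁻¹ : Aˣ) : A) * ((R p q)⁻¹ • ((t p : A) * ad q)) * (((t p)⁻¹ : Aˣ) : A) := by
      rw [hadT]
    simp only [mul_smul_comm, smul_mul_assoc, ← mul_assoc, Units.inv_mul, one_mul] at h2
    rw [mul_assoc, Units.mul_inv, mul_one] at h2
    rw [h2]
  have hant : ∀ p q, an p * (((t q)⁻¹ : Aˣ) : A)
      = (R q p)⁻¹ • ((((t q)⁻¹ : Aˣ) : A) * an p) := by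
    intro p q
    have h2 : (((t q)⁻¹ : Aˣ) : A) * (an p * (t q : A)) * (((t q)⁻¹ : Aˣ) : A)
        = (((t q)⁻¹ : Aˣ) : A) * (R q p • ((t q : A) * an p)) * (((t q)⁻¹ : Aˣ) : A) := by
      rw [hanT]
    simp only [mul_smul_comm, smul_mul_assoc, ← mul_assoc, Units.inv_mul, one_mul] at h2
    rw [mul_assoc, Units.mul_inv, mul_one] at h2
    rw [h2, smul_smul, inv_mul_cancel₀ (hR q p), one_smul]
  have htad : ∀ p q, (t p : A) * ad q = R p q • (ad q * (t p : A)) := by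
    intro p q
    rw [hadT q p, smul_smul, mul_inv_cancel₀ (hR p q), one_smul]
  have httinv : ∀ p q, Commute ((((t p)⁻¹ : Aˣ) : A)) ((((t q)⁻¹ : Aˣ) : A)) := by
    intro p q
    exact ((htt p q).units_inv_left).units_inv_right
  have hAd : ∀ p q, ad p * ad q = -(ad q * ad p) := by
    intro p q
    exact eq_neg_of_add_eq_zero_left (hcar3 p q)
  constructor
  · intro p q
    calc ad p * (((t p)⁻¹ : Aˣ) : A) * (ad q * (((t q)⁻¹ : Aˣ) : A))
        = ad p * ((((t p)⁻¹ : Aˣ) : A) * ad q) * (((t q)⁻¹ : Aˣ) : A) := by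
          noncomm_ring
      _ = (R p q)⁻¹ • (ad p * ad q * ((((t p)⁻¹ : Aˣ) : A) * (((t q)⁻¹ : Aˣ) : A))) := by
          rw [hinvad]; noncomm_ring
      _ = (R p q)⁻¹ • (-(ad q * ad p) * ((((t q)⁻¹ : Aˣ) : A) * (((t p)⁻¹ : Aˣ) : A))) := by
          rw [hAd, (httinv p q).eq]
      _ = -((R q p * (R p q)⁻¹) •
            (ad q * (((t q)⁻¹ : Aˣ) : A) * (ad p * (((t p)⁻¹ : Aˣ) : A)))) := by
          have : ad q * (((t q)⁻¹ : Aˣ) : A) * (ad p * (((t p)⁻¹ : Aˣ) : A))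
              = (R q p)⁻¹ • (ad q * ad p * ((((t q)⁻¹ : Aˣ) : A) * (((t p)⁻¹ : Aˣ) : A))) := by
            rw [show ad q * (((t q)⁻¹ : Aˣ) : A) * (ad p * (((t p)⁻¹ : Aˣ) : A))
                = ad q * ((((t q)⁻¹ : Aˣ) : A) * ad p) * (((t p)⁻¹ : Aˣ) : A) by noncomm_ring,
              hinvad]
            noncomm_ring
          rw [this, smul_smul, ← smul_neg, neg_mul]
          congr 1
          field_simp [hR p q, hR q p]
  · intro p q
    have hcar : an p * ad q = d p q - ad q * an p :=
      eq_sub_of_add_eq (hcar1 p q)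
    calc (t p : A) * an p * (ad q * (((t q)⁻¹ : Aˣ) : A))
        = (t p : A) * (an p * ad q) * (((t q)⁻¹ : Aˣ) : A) := by noncomm_ring
      _ = (t p : A) * d p q * (((t q)⁻¹ : Aˣ) : A)
          - (t p : A) * ad q * (an p * (((t q)⁻¹ : Aˣ) : A)) := by
          rw [hcar]; noncomm_ring
      _ = d p q - (R p q * (R q p)⁻¹) •
            (ad q * (((t q)⁻¹ : Aˣ) : A) * ((t p : A) * an p)) := by
          congr 1
          · rw [← (hdcomm p q (t p : A)).eq, hdt, mul_assoc, Units.mul_inv, mul_one]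
          · rw [htad, hant, smul_mul_assoc, mul_smul_comm, smul_smul]
            congr 1
            rw [show ad q * (t p : A) * ((((t q)⁻¹ : Aˣ) : A) * an p)
                = ad q * ((t p : A) * (((t q)⁻¹ : Aˣ) : A)) * an p by noncomm_ring,
              ((htt p q).units_inv_right).eq]
            noncomm_ring
end
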